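/- If D is an interval domain and x ≪ p in D with p maximal, then left(x) ≪ p and p ≪ right(x) in the poset (max(D), ≤). -/

import Mathlib

open Set

/-- `a` is way below `x`. -/
def wayBelow {α : Type*} [Preorder α] (a x : α) : Prop :=
  ∀ S : Set α, S.Nonempty → DirectedOn (· ≤ ·) S → ∀ d, IsLUB S d → x ≤ d →
    ∃ s ∈ S, a ≤ s

/-- A poset is continuous if every element is the supremum of a directed set
of elements way below it. -/
def ContinuousPoset (α : Type*) [Preorder α] : Prop :=
  ∀ x : α, ∃ S : Set α, S ⊆ {a | wayBelow a x} ∧ S.Nonempty ∧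
    DirectedOn (· ≤ ·) S ∧ IsLUB S x

/-- A basis for a continuous poset. -/
def PosetBasis {α : Type*} [Preorder α] (B : Set α) : Prop :=
  ∀ x : α, ∃ S : Set α, S ⊆ B ∩ {a | wayBelow a x} ∧ S.Nonempty ∧
    DirectedOn (· ≤ ·) S ∧ IsLUB S x

/-- Scott open sets: upper sets inaccessible by directed suprema. -/
def ScottOpen {α : Type*} [Preorder α] (U : Set α) : Prop :=
  IsUpperSet U ∧ ∀ S : Set α, S.Nonempty → DirectedOn (· ≤ ·) S → ∀ d, IsLUB S d →
    d ∈ U → (S ∩ U).Nonempty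

/-- The Scott topology. -/
def scottTop (α : Type*) [Preorder α] : TopologicalSpace α :=
  TopologicalSpace.generateFrom {U | ScottOpen U}

/-- A bicontinuous poset. -/
def Bicontinuous (α : Type*) [Preorder α] : Prop :=
  ContinuousPoset α ∧
  (∀ x y : α, wayBelow x y ↔
    ∀ S : Set α, S.Nonempty → DirectedOn (· ≥ ·) S → ∀ i, IsGLB S i → i ≤ x →
      ∃ s ∈ S, s ≤ y) ∧
  (∀ x : α, DirectedOn (· ≥ ·) {y | wayBelow x y} ∧ IsGLB {y | wayBelow x y} x)

/-- The basic open intervals `(a,b) = {x | a ≪ x ≪ b}`. -/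
def intervalBasis (α : Type*) [Preorder α] : Set (Set α) :=
  {s | ∃ a b : α, s = {x | wayBelow a x ∧ wayBelow x b}}

/-- The interval topology, generated by the sets `(a,b)`. -/
def intervalTop (α : Type*) [Preorder α] : TopologicalSpace α :=
  TopologicalSpace.generateFrom (intervalBasis α)

/-- A globally hyperbolic poset: bicontinuous, with compact closed intervals. -/
def GloballyHyperbolic (α : Type*) [PartialOrder α] : Prop :=
  Bicontinuous α ∧ ∀ a b : α, @IsCompact α (intervalTop α) (Set.Icc a b)

/-- The poset of closed intervals `[a,b]`, `a ≤ b`, under reverse inclusion. -/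
def IX (α : Type*) [PartialOrder α] := {p : α × α // p.1 ≤ p.2}

instance IX.instPartialOrder {α : Type*} [PartialOrder α] : PartialOrder (IX α) where
  le x y := x.1.1 ≤ y.1.1 ∧ y.1.2 ≤ x.1.2
  le_refl x := ⟨le_refl _, le_refl _⟩
  le_trans x y z h1 h2 := ⟨h1.1.trans h2.1, h2.2.trans h1.2⟩
  le_antisymm x y h1 h2 :=
    Subtype.ext (Prod.ext_iff.mpr ⟨le_antisymm h1.1 h2.1, le_antisymm h2.2 h1.2⟩)

section Rel

variable {β : Type*}

/-- Directedness with respect to an arbitrary relation. -/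
def relDirectedOn (r : β → β → Prop) (S : Set β) : Prop :=
  ∀ x ∈ S, ∀ y ∈ S, ∃ z ∈ S, r x z ∧ r y z

/-- Least upper bound with respect to an arbitrary relation. -/
def relIsLUB (r : β → β → Prop) (S : Set β) (d : β) : Prop :=
  (∀ s ∈ S, r s d) ∧ ∀ u, (∀ s ∈ S, r s u) → r d u

/-- The way-below relation with respect to an arbitrary relation. -/
def relWayBelow (r : β → β → Prop) (a x : β) : Prop :=
  ∀ S : Set β, S.Nonempty → relDirectedOn r S → ∀ d, relIsLUB r S d → r x d →
    ∃ s ∈ S, r a s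

/-- An abstract basis: a transitive relation, interpolative from the `-` direction. -/
def AbstractBasis (r : β → β → Prop) : Prop :=
  Transitive r ∧ ∀ (F : Finset β) (x : β), (∀ y ∈ F, r y x) →
    ∃ z, (∀ y ∈ F, r y z) ∧ r z x

/-- Interpolation in the `+` direction. -/
def PlusInterpolative (r : β → β → Prop) : Prop :=
  ∀ (F : Finset β) (x : β), (∀ y ∈ F, r x y) → ∃ z, r x z ∧ (∀ y ∈ F, r z y)

/-- An ideal: a nonempty directed lower set. -/
def IsIdeal (r : β → β → Prop) (I : Set β) : Prop :=
  I.Nonempty ∧ (∀ x y, r x y → y ∈ I → x ∈ I) ∧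
    ∀ x ∈ I, ∀ y ∈ I, ∃ z ∈ I, r x z ∧ r y z

/-- The ideal completion: ideals ordered by inclusion. -/
def IdealCompletion (r : β → β → Prop) := {I : Set β // IsIdeal r I}

instance IdealCompletion.instPartialOrder {β : Type*} (r : β → β → Prop) :
    PartialOrder (IdealCompletion r) where
  le I J := I.1 ⊆ J.1
  le_refl I := subset_rfl
  le_trans I J K h1 h2 := Set.Subset.trans h1 h2
  le_antisymm I J h1 h2 := Subtype.ext (Set.Subset.antisymm h1 h2)

end Rel

/-- The order on maximal elements induced by interval endpoints. -/
def maxLe {α : Type*} (left right : α → α) (a b : α) : Prop :=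
  ∃ x, left x = a ∧ right x = b

/-- An interval poset. -/
structure IntervalPoset (α : Type*) [PartialOrder α] where
  left : α → α
  right : α → α
  left_max : ∀ x, IsMax (left x)
  right_max : ∀ x, IsMax (right x)
  glb : ∀ x, IsGLB {left x, right x} x
  glue : ∀ x y, right x = left y →
    ∃ z, IsGLB {x, y} z ∧ left z = left x ∧ right z = right y
  sub_left : ∀ x p, IsMax p → x ≤ p →
    ∃ z, IsGLB {left x, p} z ∧ left z = left x ∧ right z = p
  sub_right : ∀ x p, IsMax p → x ≤ p →
    ∃ z, IsGLB {p, right x} z ∧ left z = p ∧ right z = right x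

/-- An interval domain. -/
structure IntervalDomain (α : Type*) [PartialOrder α] extends IntervalPoset α where
  dcpo : ∀ S : Set α, S.Nonempty → DirectedOn (· ≤ ·) S → ∃ d, IsLUB S d
  cont : ContinuousPoset α
  ax1 : ∀ x p, IsMax p → wayBelow x p →
    (∀ z, IsGLB {left x, p} z → ∃ u, wayBelow z u) ∧
    (∀ z, IsGLB {p, right x} z → ∃ u, wayBelow z u)
  ax2b : ∀ x : α, (∃ u, wayBelow x u) ↔
    (∀ y, left y = left x → y ≤ x →
      relWayBelow (fun u v => u ≤ v ∧ right u = right y ∧ right v = right y) y (right y))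
  ax2c : ∀ x : α, (∃ u, wayBelow x u) ↔
    (∀ y, right y = right x → y ≤ x →
      relWayBelow (fun u v => u ≤ v ∧ left u = left y ∧ left v = left y) y (left y))
  ax3a : ∀ (p : α) (S : Set α), S.Nonempty → S ⊆ {z | left z = p} →
    DirectedOn (· ≤ ·) S → ∀ u, IsLUB S u →
      left u = p ∧ ∀ (q : α) (T : Set α), T.Nonempty → T ⊆ {z | left z = q} →
        DirectedOn (· ≤ ·) T → ∀ v, IsLUB T v → right '' T = right '' S →
          right u = right v
  ax3b : ∀ (q : α) (S : Set α), S.Nonempty → S ⊆ {z | right z = q} →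
    DirectedOn (· ≤ ·) S → ∀ u, IsLUB S u →
      right u = q ∧ ∀ (p : α) (T : Set α), T.Nonempty → T ⊆ {z | right z = p} →
        DirectedOn (· ≤ ·) T → ∀ v, IsLUB T v → left '' T = left '' S →
          left u = left v
  ax4 : ∀ x : α, @IsCompact α (scottTop α) ({y | x ≤ y} ∩ {y | IsMax y})

/-! Axiom (i) makes the subintervals `z₁ = left x ⊓ p` and `z₂ = p ⊓ right x` have
nonempty `↟`, so it suffices to show `left z ≪ right z` in `max D` whenever `↟z ≠ ∅`.
Let `S ⊆ max D` be directed with supremum `d` above `right z`. Gluing `z` to an interval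
`[right z, d]` gives `g ⊑ z` with `left g = left z` and `right g = d`, and by (ii) `g ≪ d`
inside the fibre `[·, d]` of intervals with right endpoint `d`. The intervals `[s, d]`,
`s ∈ S`, are directed in that fibre and their supremum is `d`: by (iii) it has right
endpoint `d`, and its left endpoint bounds `S`. Hence `g ⊑ [s, d]` for some `s ∈ S`,
that is `left z ≤ s`. -/

theorem wayBelow.le {β : Type*} [Preorder β] {a x : β} (h : wayBelow a x) : a ≤ x := by
  obtain ⟨s, rfl, has⟩ :=
    h {x} (singleton_nonempty x) (directedOn_singleton x) x isLUB_singleton le_rfl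
  exact has

namespace IntervalPoset

variable {α : Type*} [PartialOrder α] (P : IntervalPoset α)

/-- The order of the fibre `[·, q]` of intervals with right endpoint `q`. -/
def rightFibreLe (q : α) (u v : α) : Prop :=
  u ≤ v ∧ P.right u = q ∧ P.right v = q

def intervalsTo (S : Set α) (d : α) : Set α :=
  {w | P.left w ∈ S ∧ P.right w = d}

theorem le_left (x : α) : x ≤ P.left x := (P.glb x).1 (mem_insert _ _)

theorem le_right (x : α) : x ≤ P.right x := (P.glb x).1 (mem_insert_of_mem _ rfl)

theorem eq_of_left_eq_of_right_eq {x y : α} (hl : P.left x = P.left y)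
    (hr : P.right x = P.right y) : x = y := by
  have hx := P.glb x
  rw [hl, hr] at hx
  exact hx.unique (P.glb y)

theorem left_eq_self {a : α} (ha : IsMax a) : P.left a = a :=
  (ha (P.le_left a)).antisymm (P.le_left a)

theorem right_eq_self {a : α} (ha : IsMax a) : P.right a = a :=
  (ha (P.le_right a)).antisymm (P.le_right a)

theorem isMax_of_maxLe_left {a b : α} (h : maxLe P.left P.right a b) : IsMax a := by
  obtain ⟨w, rfl, -⟩ := h
  exact P.left_max w

theorem isMax_of_maxLe_right {a b : α} (h : maxLe P.left P.right a b) : IsMax b := by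
  obtain ⟨w, -, rfl⟩ := h
  exact P.right_max w

theorem maxLe_left_of_le {y m : α} (hm : IsMax m) (h : y ≤ m) :
    maxLe P.left P.right (P.left y) m := by
  obtain ⟨z, -, hzl, hzr⟩ := P.sub_left y m hm h
  exact ⟨z, hzl, hzr⟩

theorem le_of_maxLe_left {w w' : α} (hr : P.right w = P.right w')
    (h : maxLe P.left P.right (P.left w) (P.left w')) : w ≤ w' := by
  obtain ⟨a, hal, har⟩ := h
  obtain ⟨g, hg, hgl, hgr⟩ := P.glue a w' har
  have hgw : g = w := P.eq_of_left_eq_of_right_eq (hgl.trans hal) (hgr.trans hr.symm)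
  exact hgw ▸ hg.1 (mem_insert_of_mem _ rfl)

theorem maxLe_antisymm {a b : α} (hab : maxLe P.left P.right a b)
    (hba : maxLe P.left P.right b a) : a = b := by
  have ha := P.isMax_of_maxLe_left hab
  obtain ⟨w, hwl, hwr⟩ := hab
  obtain ⟨w', hw'l, hw'r⟩ := hba
  obtain ⟨g, hg, hgl, hgr⟩ := P.glue w w' (hwr.trans hw'l.symm)
  have hga : g = a := P.eq_of_left_eq_of_right_eq (by rw [hgl, hwl, P.left_eq_self ha])
    (by rw [hgr, hw'r, P.right_eq_self ha])
  have hab : a ≤ b := calc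
    a = g := hga.symm
    _ ≤ w := hg.1 (mem_insert _ _)
    _ ≤ P.right w := P.le_right w
    _ = b := hwr
  exact hab.antisymm (ha hab)

variable {S : Set α} {d : α}

theorem relDirectedOn_intervalsTo (hS : relDirectedOn (maxLe P.left P.right) S)
    (hd : ∀ s ∈ S, maxLe P.left P.right s d) :
    relDirectedOn (P.rightFibreLe d) (P.intervalsTo S d) := by
  rintro w₁ ⟨hw₁S, hw₁r⟩ w₂ ⟨hw₂S, hw₂r⟩
  obtain ⟨s, hs, h₁, h₂⟩ := hS _ hw₁S _ hw₂S
  obtain ⟨w, hwl, hwr⟩ := hd s hs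
  refine ⟨w, ⟨hwl ▸ hs, hwr⟩, ⟨?_, hw₁r, hwr⟩, ⟨?_, hw₂r, hwr⟩⟩
  · exact P.le_of_maxLe_left (hw₁r.trans hwr.symm) (hwl ▸ h₁)
  · exact P.le_of_maxLe_left (hw₂r.trans hwr.symm) (hwl ▸ h₂)

end IntervalPoset

namespace IntervalDomain

open IntervalPoset

variable {α : Type*} [PartialOrder α] (D : IntervalDomain α) {S : Set α} {d : α}

theorem isLUB_intervalsTo (hSne : S.Nonempty)
    (hS : relDirectedOn (maxLe D.left D.right) S) (hd : relIsLUB (maxLe D.left D.right) S d) :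
    IsLUB (D.intervalsTo S d) d := by
  set T := D.intervalsTo S d
  have hT : ∀ s ∈ S, ∃ w ∈ T, D.left w = s := fun s hs => by
    obtain ⟨w, hwl, hwr⟩ := hd.1 s hs
    exact ⟨w, ⟨hwl ▸ hs, hwr⟩, hwl⟩
  obtain ⟨s₀, hs₀⟩ := hSne
  have hdmax : IsMax d := D.isMax_of_maxLe_right (hd.1 s₀ hs₀)
  have hTdir : DirectedOn (· ≤ ·) T := fun a ha b hb => by
    obtain ⟨c, hc, hac, hbc⟩ := D.relDirectedOn_intervalsTo hS hd.1 a ha b hb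
    exact ⟨c, hc, hac.1, hbc.1⟩
  obtain ⟨w₀, hw₀, -⟩ := hT s₀ hs₀
  obtain ⟨u, hu⟩ := D.dcpo T ⟨w₀, hw₀⟩ hTdir
  have hur : D.right u = d :=
    (D.ax3b d T ⟨w₀, hw₀⟩ (fun w hw => hw.2) hTdir u hu).1
  have hul : D.left u = d := by
    refine D.maxLe_antisymm (D.maxLe_left_of_le hdmax (hur ▸ D.le_right u)) (hd.2 _ ?_)
    intro s hs
    obtain ⟨w, hw, rfl⟩ := hT s hs
    exact D.maxLe_left_of_le (D.left_max u) ((hu.1 hw).trans (D.le_left u))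
  have hud : u = d := D.eq_of_left_eq_of_right_eq (by rw [hul, D.left_eq_self hdmax])
    (by rw [hur, D.right_eq_self hdmax])
  exact hud ▸ hu

theorem exists_mem_maxLe_of_relWayBelow (hSne : S.Nonempty)
    (hS : relDirectedOn (maxLe D.left D.right) S) (hd : relIsLUB (maxLe D.left D.right) S d)
    {g : α} (hg : relWayBelow (D.rightFibreLe d) g d) :
    ∃ s ∈ S, maxLe D.left D.right (D.left g) s := by
  obtain ⟨s₀, hs₀⟩ := hSne
  obtain ⟨w₀, hw₀l, hw₀r⟩ := hd.1 s₀ hs₀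
  have hw₀ : w₀ ∈ D.intervalsTo S d := ⟨hw₀l ▸ hs₀, hw₀r⟩
  have hdr : D.right d = d := D.right_eq_self (D.isMax_of_maxLe_right (hd.1 s₀ hs₀))
  have hT := D.isLUB_intervalsTo ⟨s₀, hs₀⟩ hS hd
  have hTlub : relIsLUB (D.rightFibreLe d) (D.intervalsTo S d) d :=
    ⟨fun w hw => ⟨hT.1 hw, hw.2, hdr⟩,
      fun v hv => ⟨hT.2 fun w hw => (hv w hw).1, hdr, (hv w₀ hw₀).2.2⟩⟩
  obtain ⟨w, ⟨hwS, -⟩, hgw, -⟩ := hg (D.intervalsTo S d) ⟨w₀, hw₀⟩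
    (D.relDirectedOn_intervalsTo hS hd.1) d hTlub ⟨le_rfl, hdr, hdr⟩
  exact ⟨_, hwS, D.maxLe_left_of_le (D.left_max w) (hgw.trans (D.le_left w))⟩

theorem relWayBelow_left_right {z : α} (hz : ∃ u, wayBelow z u) :
    relWayBelow (maxLe D.left D.right) (D.left z) (D.right z) := by
  intro S hSne hS d hd ⟨v, hvl, hvr⟩
  obtain ⟨g, hg, hgl, hgr⟩ := D.glue z v hvl.symm
  have hgd := (D.ax2b z).mp hz g hgl (hg.1 (mem_insert _ _))
  rw [hgr, hvr] at hgd
  simpa only [hgl] using D.exists_mem_maxLe_of_relWayBelow hSne hS hd hgd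

end IntervalDomain

/-- in an interval domain, `x ≪ p` with `p` maximal implies
`left x ≪ p` and `p ≪ right x` in `(max D, ≤)`. -/
theorem wayBelow_endpoints {α : Type*} [PartialOrder α] (D : IntervalDomain α)
    (x p : α) (hp : IsMax p) (hxp : wayBelow x p) :
    relWayBelow (maxLe D.left D.right) (D.left x) p ∧
    relWayBelow (maxLe D.left D.right) p (D.right x) := by
  obtain ⟨z₁, hz₁, hz₁l, hz₁r⟩ := D.sub_left x p hp hxp.le
  obtain ⟨z₂, hz₂, hz₂l, hz₂r⟩ := D.sub_right x p hp hxp.le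
  obtain ⟨hz₁up, hz₂up⟩ := D.ax1 x p hp hxp
  constructor
  · simpa only [hz₁l, hz₁r] using D.relWayBelow_left_right (hz₁up z₁ hz₁)
  · simpa only [hz₂l, hz₂r] using D.relWayBelow_left_right (hz₂up z₂ hz₂)
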